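/- Let x ∈ ℝ^d, ε ∈ (0,1), Δ ∈ (0,1), and let Ω ∈ ℝ^{r×d} have independent standard normal N(0,1) entries. If r ≥ (4/(ε²−ε³))·ln(2/Δ), then with probability at least 1−Δ the vector x satisfies the ε-JL condition under Ω, i.e. √(1−ε)·‖x‖₂ ≤ ‖(1/√r)·Ωx‖₂ ≤ √(1+ε)·‖x‖₂. -/

import Mathlib

/-
Each entry `⟨Ω i, x⟩` of `Ω x` is `N(0, ‖x‖²)` and the entries are independent, so `‖Ω x‖²` is
`‖x‖²` times a `χ²_r` variable, whose moment generating function is `(1 - 2t)^(-r/2)`. The Chernoff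
bound with the optimal `t` gives, for `s > -1`,
`P(s ‖Ω x‖² > s (1 + s) r ‖x‖²) ≤ exp (r (log (1 + s) - s) / 2)`. For `s = ±ε` the exponent is at
most `-r (ε² - ε³) / 4 ≤ -log (2 / Δ)`, so each of the two tails has probability at most `Δ / 2`.
-/

open MeasureTheory ProbabilityTheory

/-- The law of an `r × d` random matrix with independent standard normal
`N(0,1)` entries: the product Gaussian measure on `Fin r → Fin d → ℝ`. -/
noncomputable def gaussMatrix (r d : ℕ) : Measure (Fin r → Fin d → ℝ) :=
  Measure.pi fun _ : Fin r => Measure.pi fun _ : Fin d => gaussianReal 0 1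

open scoped ENNReal NNReal

lemma Real.log_one_add_le_sub_add_cube {x : ℝ} (hx : 0 ≤ x) :
    Real.log (1 + x) ≤ x - x ^ 2 / 2 + x ^ 3 / 2 := by
  set y := x - x ^ 2 / 2 + x ^ 3 / 2 with hy
  have hy0 : 0 ≤ y := by nlinarith [mul_nonneg hx (sq_nonneg (x - 1 / 2))]
  have h : 1 + x ≤ 1 + y + y ^ 2 / 2 := by
    have : 1 + y + y ^ 2 / 2 - (1 + x) = x ^ 4 * ((x - 1) ^ 2 + 4) / 8 := by rw [hy]; ring
    linarith [show 0 ≤ x ^ 4 * ((x - 1) ^ 2 + 4) / 8 by positivity]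
  rw [Real.log_le_iff_le_exp (by linarith)]
  exact h.trans (Real.quadratic_le_exp_of_nonneg hy0)

lemma Real.log_one_sub_le_neg_sub_sq {x : ℝ} (hx0 : 0 ≤ x) (hx1 : x < 1) :
    Real.log (1 - x) ≤ -x - x ^ 2 / 2 := by
  have hsum := Real.hasSum_pow_div_log_of_abs_lt_one (abs_lt.2 ⟨by linarith, hx1⟩)
  have := sum_le_hasSum (Finset.range 2) (fun n _ => by positivity) hsum
  norm_num [Finset.sum_range_succ] at this
  linarith

lemma measure_ge_le_exp_neg_mul_lintegral_exp {α : Type*} [MeasurableSpace α] (μ : Measure α)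
    {g : α → ℝ} (hg : AEMeasurable g μ) (a : ℝ) :
    μ {ω | a ≤ g ω} ≤
      ENNReal.ofReal (Real.exp (-a)) * ∫⁻ ω, ENNReal.ofReal (Real.exp (g ω)) ∂μ := by
  have hmarkov := mul_meas_ge_le_lintegral₀ (by fun_prop : AEMeasurable
    (fun ω => ENNReal.ofReal (Real.exp (g ω))) μ) (ENNReal.ofReal (Real.exp a))
  calc μ {ω | a ≤ g ω}
      = ENNReal.ofReal (Real.exp (-a)) * (ENNReal.ofReal (Real.exp a) * μ {ω | a ≤ g ω}) := by
        rw [← mul_assoc, ← ENNReal.ofReal_mul (Real.exp_nonneg _), ← Real.exp_add,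
          neg_add_cancel, Real.exp_zero, ENNReal.ofReal_one, one_mul]
    _ ≤ ENNReal.ofReal (Real.exp (-a)) * (ENNReal.ofReal (Real.exp a) *
          μ {ω | ENNReal.ofReal (Real.exp a) ≤ ENNReal.ofReal (Real.exp (g ω))}) := by
        gcongr
        exact fun hω => ENNReal.ofReal_le_ofReal (Real.exp_le_exp.2 hω)
    _ ≤ _ := by gcongr

lemma lintegral_pi_prod_eq_pow {ι α : Type*} [Fintype ι] [MeasurableSpace α] (μ : Measure α)
    [IsProbabilityMeasure μ] {f : α → ℝ≥0∞} (hf : Measurable f) :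
    ∫⁻ ω, ∏ i, f (ω i) ∂Measure.pi (fun _ : ι => μ) = (∫⁻ a, f a ∂μ) ^ Fintype.card ι := by
  rw [lintegral_prod_eq_prod_lintegral_of_indepFun _ _
    (iIndepFun_pi (X := fun _ => f) fun _ => hf.aemeasurable)
    fun i => hf.comp (measurable_pi_apply i)]
  simp_rw [(measurePreserving_eval (fun _ : ι => μ) _).lintegral_comp hf]
  exact Finset.prod_const _

lemma map_pi_gaussianReal_sum_mul {ι : Type*} [Fintype ι] (x : ι → ℝ) :
    (Measure.pi fun _ : ι => gaussianReal 0 1).map (fun ω => ∑ j, ω j * x j) =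
      gaussianReal 0 (∑ j, x j ^ 2).toNNReal := by
  have : (fun ω : ι → ℝ => ∑ j, ω j * x j) =
      innerSL ℝ (WithLp.toLp 2 x : EuclideanSpace ℝ ι) ∘ WithLp.toLp 2 := by
    ext ω; simp [PiLp.inner_apply, mul_comm]
  rw [this, ← Measure.map_map (by fun_prop) (by fun_prop), map_pi_eq_stdGaussian,
    IsGaussian.map_eq_gaussianReal, integral_strongDual_stdGaussian, variance_dual_stdGaussian,
    innerSL_apply_norm, EuclideanSpace.real_norm_sq_eq]

lemma lintegral_exp_mul_sq_gaussianReal_zero_one {s : ℝ} (hs : 2 * s < 1) :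
    ∫⁻ y, ENNReal.ofReal (Real.exp (s * y ^ 2)) ∂gaussianReal 0 1 =
      ENNReal.ofReal (1 / Real.sqrt (1 - 2 * s)) := by
  set b := (1 - 2 * s) / 2
  have hb : 0 < b := by simp only [b]; linarith
  have hdensity : ∀ y, gaussianPDF 0 1 y * ENNReal.ofReal (Real.exp (s * y ^ 2)) =
      ENNReal.ofReal ((Real.sqrt (2 * Real.pi))⁻¹ * Real.exp (-b * y ^ 2)) := by
    intro y
    rw [gaussianPDF, ← ENNReal.ofReal_mul (gaussianPDFReal_nonneg _ _ _), gaussianPDFReal_def,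
      mul_assoc, ← Real.exp_add]
    simp only [NNReal.coe_one, mul_one, sub_zero, b]
    congr 3
    ring
  rw [gaussianReal_of_var_ne_zero _ one_ne_zero,
    lintegral_withDensity_eq_lintegral_mul₀ (measurable_gaussianPDF 0 1).aemeasurable
      (by fun_prop)]
  simp only [Pi.mul_apply, hdensity]
  rw [← ofReal_integral_eq_lintegral_ofReal ((integrable_exp_neg_mul_sq hb).const_mul _)
      (ae_of_all _ fun y => by positivity), integral_const_mul, integral_gaussian]
  congr 1
  rw [← Real.sqrt_inv, ← Real.sqrt_mul (by positivity), one_div, ← Real.sqrt_inv]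
  congr 1
  simp only [b]
  field_simp

lemma lintegral_exp_mul_sq_gaussianReal {v : ℝ≥0} {t : ℝ} (h : 2 * t * v < 1) :
    ∫⁻ y, ENNReal.ofReal (Real.exp (t * y ^ 2)) ∂gaussianReal 0 v =
      ENNReal.ofReal (1 / Real.sqrt (1 - 2 * t * v)) := by
  have hv : gaussianReal 0 v = (gaussianReal 0 1).map (Real.sqrt v * ·) := by
    rw [gaussianReal_map_const_mul, mul_zero, mul_one]
    congr
    ext
    simp
  rw [hv, lintegral_map (by fun_prop) (by fun_prop)]
  simp_rw [mul_pow, Real.sq_sqrt v.coe_nonneg, ← mul_assoc]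
  rw [lintegral_exp_mul_sq_gaussianReal_zero_one (by linarith), mul_assoc]

instance isProbabilityMeasure_gaussMatrix (r d : ℕ) : IsProbabilityMeasure (gaussMatrix r d) := by
  unfold gaussMatrix; infer_instance

lemma lintegral_exp_mul_sum_sq_gaussMatrix {r d : ℕ} (x : Fin d → ℝ) {t : ℝ}
    (h : 2 * t * ∑ j, x j ^ 2 < 1) :
    ∫⁻ Ω, ENNReal.ofReal (Real.exp (t * ∑ i, (∑ j, Ω i j * x j) ^ 2)) ∂gaussMatrix r d =
      ENNReal.ofReal (1 / Real.sqrt (1 - 2 * t * ∑ j, x j ^ 2)) ^ r := by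
  have hrow : ∫⁻ ω, ENNReal.ofReal (Real.exp (t * (∑ j, ω j * x j) ^ 2))
      ∂Measure.pi (fun _ : Fin d => gaussianReal 0 1) =
        ENNReal.ofReal (1 / Real.sqrt (1 - 2 * t * ∑ j, x j ^ 2)) := by
    have hc : 0 ≤ ∑ j, x j ^ 2 := by positivity
    rw [← lintegral_map (f := fun y => ENNReal.ofReal (Real.exp (t * y ^ 2))) (by fun_prop)
      (by fun_prop), map_pi_gaussianReal_sum_mul,
      lintegral_exp_mul_sq_gaussianReal (by rwa [Real.coe_toNNReal _ hc]),
      Real.coe_toNNReal _ hc]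
  have hprod : ∀ Ω : Fin r → Fin d → ℝ,
      ENNReal.ofReal (Real.exp (t * ∑ i, (∑ j, Ω i j * x j) ^ 2)) =
        ∏ i, ENNReal.ofReal (Real.exp (t * (∑ j, Ω i j * x j) ^ 2)) := fun Ω => by
    rw [Finset.mul_sum, Real.exp_sum, ENNReal.ofReal_prod_of_nonneg fun _ _ => Real.exp_nonneg _]
  simp_rw [hprod]
  rw [gaussMatrix, lintegral_pi_prod_eq_pow _
    (f := fun ω : Fin d → ℝ => ENNReal.ofReal (Real.exp (t * (∑ j, ω j * x j) ^ 2)))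
    (by fun_prop), hrow, Fintype.card_fin]

lemma gaussMatrix_tail_le {r d : ℕ} (x : Fin d → ℝ) {s : ℝ} (hs : -1 < s) :
    gaussMatrix r d {Ω | s * ((1 + s) * (∑ j, x j ^ 2) * r) < s * ∑ i, (∑ j, Ω i j * x j) ^ 2} ≤
      ENNReal.ofReal (Real.exp (r * (Real.log (1 + s) - s) / 2)) := by
  set c := ∑ j, x j ^ 2
  rcases (show 0 ≤ c by positivity).eq_or_lt with hc | hc
  · have hx : x = 0 := funext fun j => by
      simpa using (Finset.sum_eq_zero_iff_of_nonneg fun j _ => sq_nonneg (x j)).1 hc.symm j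
        (Finset.mem_univ j)
    simp [← hc, hx]
  have hs' : 0 < 1 + s := by linarith
  -- the optimal Chernoff parameter: it makes `1 - 2 t c = (1 + s)⁻¹`
  set t := s / (2 * (1 + s) * c)
  have htc : 1 - 2 * t * c = (1 + s)⁻¹ := by simp only [t]; field_simp; ring
  have hsqrt : 1 / Real.sqrt (1 - 2 * t * c) = Real.exp (Real.log (1 + s) / 2) := by
    rw [htc, Real.sqrt_inv, one_div, inv_inv, ← Real.log_sqrt hs'.le,
      Real.exp_log (Real.sqrt_pos.2 hs')]
  calc gaussMatrix r d {Ω | s * ((1 + s) * c * r) < s * ∑ i, (∑ j, Ω i j * x j) ^ 2}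
      ≤ gaussMatrix r d {Ω | t * ((1 + s) * c * r) ≤ t * ∑ i, (∑ j, Ω i j * x j) ^ 2} := by
        refine measure_mono fun Ω hΩ => ?_
        have := mul_le_mul_of_nonneg_right hΩ.le (by positivity : 0 ≤ (2 * (1 + s) * c)⁻¹)
        simp only [Set.mem_ofPred_eq, t, div_eq_mul_inv]
        linarith
    _ ≤ ENNReal.ofReal (Real.exp (-(t * ((1 + s) * c * r)))) *
          ENNReal.ofReal (1 / Real.sqrt (1 - 2 * t * c)) ^ r := by
        rw [← lintegral_exp_mul_sum_sq_gaussMatrix x (by linarith [inv_pos.2 hs'])]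
        exact measure_ge_le_exp_neg_mul_lintegral_exp _ ((by fun_prop : Measurable
          fun Ω : Fin r → Fin d → ℝ => ∑ i, (∑ j, Ω i j * x j) ^ 2).const_mul t).aemeasurable _
    _ = ENNReal.ofReal (Real.exp (r * (Real.log (1 + s) - s) / 2)) := by
        rw [hsqrt, ← ENNReal.ofReal_pow (Real.exp_nonneg _),
          ← ENNReal.ofReal_mul (Real.exp_nonneg _), ← Real.exp_nat_mul, ← Real.exp_add]
        congr 2
        simp only [t]
        field_simp
        ring

lemma gaussMatrix_tail_le_half {r d : ℕ} (x : Fin d → ℝ) {ε Δ s : ℝ} (hε0 : 0 < ε)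
    (hε1 : ε < 1) (hΔ0 : 0 < Δ) (hr : (4 / (ε ^ 2 - ε ^ 3)) * Real.log (2 / Δ) ≤ (r : ℝ))
    (hs : s = ε ∨ s = -ε) :
    gaussMatrix r d {Ω | s * ((1 + s) * (∑ j, x j ^ 2) * r) < s * ∑ i, (∑ j, Ω i j * x j) ^ 2} ≤
      ENNReal.ofReal (Δ / 2) := by
  have hεε : 0 < ε ^ 2 - ε ^ 3 := by nlinarith [pow_pos hε0 2]
  have hrate : Real.log (1 + s) - s ≤ -(ε ^ 2 - ε ^ 3) / 2 := by
    rcases hs with rfl | rfl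
    · linarith [Real.log_one_add_le_sub_add_cube hε0.le]
    · rw [← sub_eq_add_neg]
      linarith [Real.log_one_sub_le_neg_sub_sq hε0.le hε1, pow_pos hε0 3]
  rw [div_mul_eq_mul_div, div_le_iff₀ hεε] at hr
  refine (gaussMatrix_tail_le x (by rcases hs with rfl | rfl <;> linarith)).trans
    (ENNReal.ofReal_le_ofReal ?_)
  calc Real.exp (r * (Real.log (1 + s) - s) / 2) ≤ Real.exp (-Real.log (2 / Δ)) := by
        gcongr; nlinarith [(Nat.cast_nonneg r : (0 : ℝ) ≤ r)]
    _ = Δ / 2 := by rw [Real.exp_neg, Real.exp_log (by positivity), inv_div]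

lemma sqrt_bounds_of_sum_sq_bounds {r : ℕ} (hr : 0 < r) {a b c : ℝ} (hc : 0 ≤ c)
    {y : Fin r → ℝ} (ha : a * c * r ≤ ∑ i, y i ^ 2) (hb : ∑ i, y i ^ 2 ≤ b * c * r) :
    Real.sqrt a * Real.sqrt c ≤ Real.sqrt (∑ i, ((1 / Real.sqrt r) * y i) ^ 2) ∧
      Real.sqrt (∑ i, ((1 / Real.sqrt r) * y i) ^ 2) ≤ Real.sqrt b * Real.sqrt c := by
  have hr' : (0 : ℝ) < r := by exact_mod_cast hr
  have hscale : ∑ i, ((1 / Real.sqrt r) * y i) ^ 2 = (∑ i, y i ^ 2) / r := by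
    simp_rw [mul_pow, div_pow, Real.sq_sqrt hr'.le, ← Finset.mul_sum]
    ring
  rw [hscale, ← Real.sqrt_mul' _ hc, ← Real.sqrt_mul' _ hc]
  exact ⟨Real.sqrt_le_sqrt ((le_div_iff₀ hr').2 ha), Real.sqrt_le_sqrt ((div_le_iff₀ hr').2 hb)⟩

/-- the ε-JL condition holds with probability at least 1−Δ.
For a fixed `x ∈ ℝ^d`, `ε, Δ ∈ (0,1)` and a random `Ω ∈ ℝ^{r×d}` with iid
`N(0,1)` entries, if `r ≥ (4/(ε²−ε³))·ln(2/Δ)` then with probability at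
least `1 − Δ` one has `√(1−ε)·‖x‖₂ ≤ ‖(1/√r)·Ωx‖₂ ≤ √(1+ε)·‖x‖₂`. -/
theorem stmt5 (d r : ℕ) (x : Fin d → ℝ) (ε Δ : ℝ)
    (hε0 : 0 < ε) (hε1 : ε < 1) (hΔ0 : 0 < Δ) (hΔ1 : Δ < 1)
    (hr : (4 / (ε ^ 2 - ε ^ 3)) * Real.log (2 / Δ) ≤ (r : ℝ)) :
    gaussMatrix r d {Ω | Real.sqrt (1 - ε) * Real.sqrt (∑ j, x j ^ 2) ≤
          Real.sqrt (∑ i : Fin r, ((1 / Real.sqrt r) * ∑ j, Ω i j * x j) ^ 2) ∧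
        Real.sqrt (∑ i : Fin r, ((1 / Real.sqrt r) * ∑ j, Ω i j * x j) ^ 2) ≤
          Real.sqrt (1 + ε) * Real.sqrt (∑ j, x j ^ 2)} ≥
      ENNReal.ofReal (1 - Δ) := by
  have hr0 : 0 < r := by
    have hεε : 0 < ε ^ 2 - ε ^ 3 := by nlinarith [pow_pos hε0 2]
    have hlog : 0 < Real.log (2 / Δ) := Real.log_pos ((one_lt_div hΔ0).2 (by linarith))
    exact_mod_cast (mul_pos (div_pos four_pos hεε) hlog).trans_le hr
  set tail : ℝ → Set (Fin r → Fin d → ℝ) :=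
    fun s => {Ω | s * ((1 + s) * (∑ j, x j ^ 2) * r) < s * ∑ i, (∑ j, Ω i j * x j) ^ 2}
  have htail_meas : ∀ s, MeasurableSet (tail s) := fun s =>
    measurableSet_lt measurable_const ((by fun_prop : Measurable
      fun Ω : Fin r → Fin d → ℝ => ∑ i, (∑ j, Ω i j * x j) ^ 2).const_mul s)
  have hupper := gaussMatrix_tail_le_half x hε0 hε1 hΔ0 hr (.inl rfl)
  have hlower := gaussMatrix_tail_le_half x hε0 hε1 hΔ0 hr (.inr rfl)
  calc ENNReal.ofReal (1 - Δ) = 1 - (ENNReal.ofReal (Δ / 2) + ENNReal.ofReal (Δ / 2)) := by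
        rw [← ENNReal.ofReal_add (by positivity) (by positivity), add_halves,
          ENNReal.ofReal_sub _ hΔ0.le, ENNReal.ofReal_one]
    _ ≤ 1 - gaussMatrix r d (tail ε ∪ tail (-ε)) := by
        gcongr; exact (measure_union_le _ _).trans (add_le_add hupper hlower)
    _ = gaussMatrix r d (tail ε ∪ tail (-ε))ᶜ :=
        (prob_compl_eq_one_sub ((htail_meas ε).union (htail_meas (-ε)))).symm
    _ ≤ _ := measure_mono fun Ω hΩ => by
        simp only [Set.compl_union, Set.mem_inter_iff, Set.mem_compl_iff, tail,
          Set.mem_ofPred_eq, not_lt, ← sub_eq_add_neg] at hΩ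
        exact sqrt_bounds_of_sum_sq_bounds hr0 (by positivity)
          ((mul_le_mul_left_of_neg (neg_neg_of_pos hε0)).1 hΩ.2)
          (le_of_mul_le_mul_left hΩ.1 hε0)
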